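/- Let σ : I¹ → I be a linear system and let x ∈ J_σ be a wandering point, i.e., the points σ^k(x), k ≥ 0, are pairwise distinct. Then the ω-limit set of x — the set of all y ∈ ℝ such that σ^{k_t}(x) → y for some sequence of integers k_t → ∞ — is an infinite set. -/

import Mathlib

/-!
Suppose the cluster set `Ω` of a bounded injective orbit `x (k + 1) = g (j k) (x k)` of finitely
many similarities `g i` (ratios `c i`) were finite. The orbit tends to `Ω`, so `x k` has a partner
`y k ∈ Ω` with `ε k := dist (x k) (y k) → 0`. Every pair `(y k, j k)` recurring infinitely often
makes `g (j k) (y k)` a cluster point, so by finiteness eventually `y (k + 1) = g (j k) (y k)` and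
`ε (k + 1) = c (j k) * ε k`. For a linear system `c j = |I_{i(j)}| / |I¹_j|` where `σ(I¹_j) = I_{i(j)}`,
and the next domain interval lies in `I_{i(j)}`; hence `ε k / |I¹_{j k}|` is eventually
nondecreasing, and since it tends to `0` it eventually vanishes. Then the orbit eventually lies in
the finite set `Ω`, which a wandering orbit cannot do.
-/

noncomputable section

/-- Iterated preimages `I^k` for a map `σ` with domain pieces `I1 ⊆ I`:
`I⁰ = I`, `I^{k+1} = {x ∈ I¹ : σ x ∈ I^k}`. -/
def levIter (σ : ℝ → ℝ) (I1 I : Set ℝ) : ℕ → Set ℝ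
  | 0 => I
  | k + 1 => {x | x ∈ I1 ∧ σ x ∈ levIter σ I1 I k}

/-- A linear system `σ : I¹ → I` on finite collections of pairwise disjoint
bounded open intervals `I = I₁ ∪ ⋯ ∪ Iₙ` and `I¹ = I¹₁ ∪ ⋯ ∪ I¹ₘ`. -/
structure LinearSystem (n m : ℕ) where
  /-- the intervals of the range -/
  I : Fin n → Set ℝ
  /-- the intervals of the domain -/
  I1 : Fin m → Set ℝ
  /-- the map (extended arbitrarily outside `I¹`) -/
  σ : ℝ → ℝ
  hI : ∀ i, ∃ a b : ℝ, a < b ∧ I i = Set.Ioo a b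
  hI1 : ∀ j, ∃ a b : ℝ, a < b ∧ I1 j = Set.Ioo a b
  hdisj : Pairwise fun i i' => Disjoint (I i) (I i')
  hdisj1 : Pairwise fun j j' => Disjoint (I1 j) (I1 j')
  /-- each `I¹ⱼ` is contained in some `Iᵢ` -/
  hsub : ∀ j, ∃ i, I1 j ⊆ I i
  /-- `σ` restricted to each `I¹ⱼ` is an affine bijection onto some `Iᵢ` -/
  haff : ∀ j, ∃ i, ∃ a b : ℝ, a ≠ 0 ∧ (∀ x ∈ I1 j, σ x = a * x + b) ∧
    σ '' I1 j = I i
  /-- exactness: each endpoint of each `Iᵢ` is an endpoint of a component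
  `I¹ⱼ ⊆ Iᵢ` -/
  hexact : ∀ i, (∃ j, I1 j ⊆ I i ∧ sInf (I1 j) = sInf (I i)) ∧
    (∃ j, I1 j ⊆ I i ∧ sSup (I1 j) = sSup (I i))
  /-- mixing: some `I^N` meets every `Iᵢ` in a nonempty disconnected set -/
  hmix : ∃ N : ℕ, 1 ≤ N ∧ ∀ i,
    ((levIter σ (⋃ j, I1 j) (⋃ i, I i) N) ∩ I i).Nonempty ∧
    ¬ IsPreconnected ((levIter σ (⋃ j, I1 j) (⋃ i, I i) N) ∩ I i)

/-- The set `I^k` of a linear system. -/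
def LinearSystem.lev {n m : ℕ} (L : LinearSystem n m) : ℕ → Set ℝ :=
  levIter L.σ (⋃ j, L.I1 j) (⋃ i, L.I i)

/-- The Julia set `J_σ = ⋂_{k ≥ 1} I^k` of a linear system. -/
def LinearSystem.julia {n m : ℕ} (L : LinearSystem n m) : Set ℝ :=
  ⋂ k : ℕ, L.lev (k + 1)

end

open Set Filter Topology Metric Bornology

theorem eventually_frequently_eq_of_finite_range {α : Type*} {p : ℕ → α}
    (hp : (range p).Finite) : ∀ᶠ k in atTop, ∃ᶠ k' in atTop, p k' = p k := by
  rw [← Nat.cofinite_eq_atTop, eventually_cofinite]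
  refine ((hp.inter_of_left {v | (p ⁻¹' {v}).Finite}).biUnion fun v hv => hv.2).subset ?_
  intro k hk
  rw [mem_ofPred_eq, frequently_cofinite_iff_infinite, not_infinite] at hk
  exact mem_biUnion ⟨mem_range_self k, hk⟩ rfl

theorem Set.Finite.eventually_eq_of_tendsto_dist_zero {X ι : Type*} [MetricSpace X] {l : Filter ι}
    {s : Set X} (hs : s.Finite) {u v : ι → X} (hu : ∀ᶠ k in l, u k ∈ s)
    (hv : ∀ᶠ k in l, v k ∈ s) (huv : Tendsto (fun k => dist (u k) (v k)) l (𝓝 0)) :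
    ∀ᶠ k in l, u k = v k := by
  have hD : (Function.uncurry dist '' (s ×ˢ s \ diagonal X))ᶜ ∈ 𝓝 (0 : ℝ) := by
    refine (((hs.prod hs).sdiff).image _).isClosed.compl_mem_nhds ?_
    rintro ⟨⟨p, q⟩, ⟨-, hpq⟩, h⟩
    exact hpq (dist_eq_zero.1 h)
  filter_upwards [hu, hv, huv hD] with k hu hv hk
  by_contra hne
  exact hk ⟨(u k, v k), ⟨⟨hu, hv⟩, hne⟩, rfl⟩

theorem IsCompact.exists_mem_tendsto_dist_zero_of_tendsto_nhdsSet {X ι : Type*} [PseudoMetricSpace X]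
    {l : Filter ι} [l.NeBot] {s : Set X} (hs : IsCompact s) {x : ι → X}
    (hx : Tendsto x l (𝓝ˢ s)) :
    ∃ y : ι → X, (∀ k, y k ∈ s) ∧ Tendsto (fun k => dist (x k) (y k)) l (𝓝 0) := by
  obtain rfl | hne := s.eq_empty_or_nonempty
  · simp [nhdsSet_empty, NeBot.ne ‹_›] at hx
  choose y hy hxy using fun k => hs.exists_infDist_eq_dist hne (x k)
  refine ⟨y, hy, ?_⟩
  simp_rw [← hxy]
  refine tendsto_order.2 ⟨fun r hr => Eventually.of_forall fun k => hr.trans_le infDist_nonneg,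
    fun r hr => ?_⟩
  filter_upwards [hx (thickening_mem_nhdsSet s hr)] with k hk
  exact (mem_thickening_iff_infDist_lt hne).1 hk

theorem mapClusterPt_apply_of_frequently {X ι : Type*} [PseudoMetricSpace X] {g : ι → X → X}
    {x y : ℕ → X} {j : ℕ → ι} (hx : ∀ k, x (k + 1) = g (j k) (x k))
    (hxy : Tendsto (fun k => dist (x k) (y k)) atTop (𝓝 0)) {z : X} {i : ι}
    (hg : ContinuousAt (g i) z) (hfreq : ∃ᶠ k in atTop, y k = z ∧ j k = i) :
    MapClusterPt (g i z) atTop x := by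
  rw [mapClusterPt_iff_frequently]
  intro U hU
  obtain ⟨r, hr, hball⟩ := Metric.mem_nhds_iff.1 (hg hU)
  have hnext : ∃ᶠ k in atTop, x (k + 1) ∈ U := by
    refine (hfreq.and_eventually ((tendsto_order.1 hxy).2 r hr)).mono ?_
    rintro k ⟨⟨rfl, rfl⟩, hk⟩
    rw [hx]
    exact hball hk
  exact (tendsto_add_atTop_nat 1).frequently hnext

theorem eventually_eq_zero_of_div_le_div_succ {ε ℓ : ℕ → ℝ} {c : ℝ} (hc : 0 < c)
    (hℓ : ∀ k, c ≤ ℓ k) (hε : ∀ k, 0 ≤ ε k) (hε0 : Tendsto ε atTop (𝓝 0))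
    (hmono : ∀ᶠ k in atTop, ε k / ℓ k ≤ ε (k + 1) / ℓ (k + 1)) :
    ∀ᶠ k in atTop, ε k = 0 := by
  obtain ⟨K, hK⟩ := eventually_atTop.1 hmono
  refine eventually_atTop.2 ⟨K, fun k hk => ?_⟩
  have hr : Monotone fun t => ε (k + t) / ℓ (k + t) :=
    monotone_nat_of_le_succ fun t => hK (k + t) (by omega)
  have hr0 : Tendsto (fun t => ε (k + t) / ℓ (k + t)) atTop (𝓝 0) := by
    refine squeeze_zero (fun t => div_nonneg (hε _) (hc.trans_le (hℓ _)).le)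
      (fun t => div_le_div_of_nonneg_left (hε _) hc (hℓ _)) ?_
    simpa [add_comm k] using ((tendsto_add_atTop_iff_nat k).2 hε0).div_const c
  have hk0 : ε k / ℓ k ≤ 0 := by simpa using hr.ge_of_tendsto hr0 0
  exact le_antisymm (by simpa using (div_le_iff₀ (hc.trans_le (hℓ k))).1 hk0) (hε k)

theorem infinite_setOf_mapClusterPt_of_similarities {X ι : Type*} [MetricSpace X] [ProperSpace X]
    [Finite ι] {g : ι → X → X} {c ℓ : ι → ℝ} (hg : ∀ i p q, dist (g i p) (g i q) = c i * dist p q)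
    (hℓ : ∀ i, 0 < ℓ i) {x : ℕ → X} {j : ℕ → ι} (hx : ∀ k, x (k + 1) = g (j k) (x k))
    (hℓx : ∀ k, ℓ (j (k + 1)) ≤ c (j k) * ℓ (j k)) (hbdd : IsBounded (range x))
    (hinj : Function.Injective x) : {y | MapClusterPt y atTop x}.Infinite := by
  intro hΩ
  set Ω := {y | MapClusterPt y atTop x}
  have hxΩ : Tendsto x atTop (𝓝ˢ Ω) :=
    hbdd.isCompact_closure.tendsto_nhdsSet_of_mapClusterPt
      (Eventually.of_forall fun k => subset_closure (mem_range_self k)) fun _ _ hy => hy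
  obtain ⟨y, hyΩ, hxy⟩ := hΩ.isCompact.exists_mem_tendsto_dist_zero_of_tendsto_nhdsSet hxΩ
  set ε := fun k => dist (x k) (y k)
  have hgyΩ : ∀ᶠ k in atTop, g (j k) (y k) ∈ Ω := by
    have hfin : (range fun k => (y k, j k)).Finite :=
      (hΩ.prod finite_univ).subset (range_subset_iff.2 fun k => ⟨hyΩ k, mem_univ _⟩)
    refine (eventually_frequently_eq_of_finite_range hfin).mono fun k hk => ?_
    have hcont : Continuous (g (j k)) := (LipschitzWith.of_dist_le_mul fun p q =>
      (hg _ p q).trans_le (by gcongr; exact Real.le_coe_toNNReal _)).continuous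
    exact mapClusterPt_apply_of_frequently hx hxy hcont.continuousAt
      (hk.mono fun _ h => Prod.ext_iff.1 h)
  obtain ⟨C, hC⟩ := (finite_range c).bddAbove
  have hy_step : ∀ᶠ k in atTop, y (k + 1) = g (j k) (y k) := by
    refine hΩ.eventually_eq_of_tendsto_dist_zero (Eventually.of_forall fun k => hyΩ _) hgyΩ ?_
    refine squeeze_zero (fun _ => dist_nonneg) (fun k => ?_) (by
      simpa using ((tendsto_add_atTop_iff_nat 1).2 hxy).add (hxy.const_mul C))
    calc dist (y (k + 1)) (g (j k) (y k))
        ≤ ε (k + 1) + dist (x (k + 1)) (g (j k) (y k)) := dist_triangle_left _ _ _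
      _ = ε (k + 1) + c (j k) * ε k := by rw [hx, hg]
      _ ≤ ε (k + 1) + C * ε k := by gcongr; exact hC (mem_range_self _)
  have hmono : ∀ᶠ k in atTop, ε k / ℓ (j k) ≤ ε (k + 1) / ℓ (j (k + 1)) := by
    refine hy_step.mono fun k hk => ?_
    have hε : ε (k + 1) = c (j k) * ε k := by simp only [ε, hx, hk, hg]
    rw [div_le_div_iff₀ (hℓ _) (hℓ _), hε]
    nlinarith [mul_le_mul_of_nonneg_left (hℓx k) (dist_nonneg : 0 ≤ ε k)]
  have : Nonempty ι := ⟨j 0⟩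
  obtain ⟨i₀, hi₀⟩ := Finite.exists_min ℓ
  have hxΩ : ∀ᶠ k in atTop, x k ∈ Ω :=
    (eventually_eq_zero_of_div_le_div_succ (hℓ i₀) (fun k => hi₀ (j k)) (fun _ => dist_nonneg)
      hxy hmono).mono fun k hk => dist_eq_zero.1 hk ▸ hyΩ k
  exact Nat.frequently_atTop_iff_infinite.1 hxΩ.frequently (hΩ.preimage hinj.injOn)

theorem diam_image_smul_add {𝕜 E : Type*} [NormedField 𝕜] [SeminormedAddCommGroup E]
    [NormedSpace 𝕜 E] (a : 𝕜) (b : E) (s : Set E) :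
    diam ((fun z => a • z + b) '' s) = ‖a‖ * diam s := by
  rw [← image_image (· + b) (a • ·), (isometry_add_right b).diam_image, image_smul, diam_smul₀]

namespace LinearSystem

variable {n m : ℕ} (L : LinearSystem n m)

theorem mem_domain_of_mem_julia {x : ℝ} (hx : x ∈ L.julia) : x ∈ ⋃ j, L.I1 j :=
  (mem_iInter.1 hx 0).1

theorem map_mem_julia {x : ℝ} (hx : x ∈ L.julia) : L.σ x ∈ L.julia :=
  mem_iInter.2 fun k => (mem_iInter.1 hx (k + 1)).2

theorem iterate_mem_julia {x : ℝ} (hx : x ∈ L.julia) (k : ℕ) : L.σ^[k] x ∈ L.julia := by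
  induction k with
  | zero => exact hx
  | succ k ih => rw [Function.iterate_succ_apply']; exact L.map_mem_julia ih

theorem isBounded_I (i : Fin n) : IsBounded (L.I i) := by
  obtain ⟨a, b, -, h⟩ := L.hI i
  exact h ▸ isBounded_Ioo a b

theorem isBounded_iUnion_I1 : IsBounded (⋃ j, L.I1 j) :=
  isBounded_iUnion.2 fun j => by
    obtain ⟨a, b, -, h⟩ := L.hI1 j
    exact h ▸ isBounded_Ioo a b

theorem diam_I1_pos (j : Fin m) : 0 < diam (L.I1 j) := by
  obtain ⟨a, b, hab, h⟩ := L.hI1 j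
  rw [h, Real.diam_Ioo hab.le]
  linarith

theorem exists_eqOn_affine_and_diam_le (j : Fin m) :
    ∃ a b : ℝ, EqOn L.σ (fun z => a * z + b) (L.I1 j) ∧
      ∀ j', ∀ z ∈ L.I1 j, L.σ z ∈ L.I1 j' → diam (L.I1 j') ≤ |a| * diam (L.I1 j) := by
  obtain ⟨i, a, b, -, hσ, himage⟩ := L.haff j
  refine ⟨a, b, hσ, fun j' z hz hz' => ?_⟩
  obtain ⟨i', hi'⟩ := L.hsub j'
  have hi : i' = i :=
    L.hdisj.eq (not_disjoint_iff.2 ⟨L.σ z, hi' hz', himage ▸ mem_image_of_mem _ hz⟩)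
  calc diam (L.I1 j') ≤ diam (L.I i) := diam_mono (hi ▸ hi') (L.isBounded_I i)
    _ = diam ((fun z => a • z + b) '' L.I1 j) := by rw [← himage, image_congr hσ]; rfl
    _ = |a| * diam (L.I1 j) := diam_image_smul_add a b _

end LinearSystem

theorem linearSystem_omega_limit_infinite {n m : ℕ} (L : LinearSystem n m)
    (x : ℝ) (hx : x ∈ L.julia)
    (hwandering : Function.Injective fun k : ℕ => L.σ^[k] x) :
    {y : ℝ | ∃ φ : ℕ → ℕ, Filter.Tendsto φ Filter.atTop Filter.atTop ∧
      Filter.Tendsto (fun t => L.σ^[φ t] x) Filter.atTop (nhds y)}.Infinite := by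
  have horbit := L.iterate_mem_julia hx
  choose j hj using fun k => mem_iUnion.1 (L.mem_domain_of_mem_julia (horbit k))
  choose a b hσ hdiam using L.exists_eqOn_affine_and_diam_le
  have hstep (k : ℕ) : L.σ^[k + 1] x = a (j k) * L.σ^[k] x + b (j k) := by
    rw [Function.iterate_succ_apply']
    exact hσ _ (hj k)
  have hbdd : IsBounded (range fun k => L.σ^[k] x) :=
    L.isBounded_iUnion_I1.subset
      (range_subset_iff.2 fun k => L.mem_domain_of_mem_julia (horbit k))
  refine (infinite_setOf_mapClusterPt_of_similarities (g := fun i z => a i * z + b i)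
    (c := fun i => |a i|) (fun i p q => ?_) L.diam_I1_pos hstep (fun k => ?_) hbdd
    hwandering).mono fun y hy => ?_
  · rw [Real.dist_eq, Real.dist_eq, ← abs_mul]
    ring_nf
  · refine hdiam (j k) (j (k + 1)) _ (hj k) ?_
    rw [← Function.iterate_succ_apply' L.σ]
    exact hj (k + 1)
  · obtain ⟨ψ, hψ, h⟩ := hy.tendsto_subseq
    exact ⟨ψ, hψ.tendsto_atTop, h⟩
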